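/- arXiv:2511.05871 — 4 statements merged into one kernel-verified Lean document; each statement's English description precedes it below -/
import Mathlib

section
/- Let φ : A → B be a ring homomorphism between commutative Noetherian rings such that B is flat as an A-module, and let M be an A-module. Then the set of associated primes of the B-module M ⊗_A B equals the union, over all P in Ass_A(M), of Ass_B(B/PB). -/
open TensorProduct

section AuxiliaryLemmas

lemma isAssociatedPrime_of_exact {R X X' X'' : Type*} [CommRing R]
    [AddCommGroup X] [Module R X] [AddCommGroup X'] [Module R X']
    [AddCommGroup X''] [Module R X'']
    (f : X' →ₗ[R] X) (g : X →ₗ[R] X'')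
    (hf : Function.Injective f) (hfg : Function.Exact f g)
    {Q : Ideal R} (h : IsAssociatedPrime Q X) :
    IsAssociatedPrime Q X' ∨ IsAssociatedPrime Q X'' := by
  exact associatedPrimes.subset_union_of_exact hf hfg h

lemma isAP_iff' {R M : Type*} [CommRing R] [IsNoetherianRing R] [AddCommGroup M] [Module R M]
    {I : Ideal R} :
    IsAssociatedPrime I M ↔ I.IsPrime ∧ ∃ x : M, I = (Submodule.span R {x}).annihilator := by
  rw [isAssociatedPrime_iff]
  have h : ∀ x : M, Submodule.colon (⊥ : Submodule R M) {x}
      = (Submodule.span R {x}).annihilator := fun x => by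
    ext c
    rw [Submodule.mem_colon_singleton, Submodule.mem_bot,
      Submodule.mem_annihilator_span_singleton]
  simp only [h]

variable {A B : Type*} [CommRing A] [CommRing B] [Algebra A B]

variable (A B) in
noncomputable def fwd0 (P : Ideal A) : B →ₗ[B] B ⊗[A] (A ⧸ P) where
  toFun b := b ⊗ₜ (1 : A ⧸ P)
  map_add' x y := TensorProduct.add_tmul x y 1
  map_smul' r x := by
    rw [RingHom.id_apply, TensorProduct.smul_tmul', smul_eq_mul]

variable (A B) in
noncomputable def quotMapEquivTensorQuot (P : Ideal A) :
    (B ⧸ Ideal.map (algebraMap A B) P) ≃ₗ[B] B ⊗[A] (A ⧸ P) := by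
  have hker : Ideal.map (algebraMap A B) P ≤ LinearMap.ker (fwd0 A B P) := by
    rw [Ideal.map]
    refine Ideal.span_le.mpr ?_
    rintro _ ⟨p, hp, rfl⟩
    simp only [SetLike.mem_coe, LinearMap.mem_ker]
    show algebraMap A B p ⊗ₜ (1 : A ⧸ P) = 0
    rw [Algebra.algebraMap_eq_smul_one, TensorProduct.smul_tmul]
    have : p • (1 : A ⧸ P) = 0 := by
      rw [← Algebra.algebraMap_eq_smul_one, Ideal.Quotient.algebraMap_eq,
        Ideal.Quotient.eq_zero_iff_mem]
      exact hp
    rw [this, TensorProduct.tmul_zero]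
  have hgker : ∀ p ∈ P,
      Algebra.linearMap A (B ⧸ Ideal.map (algebraMap A B) P) p = 0 := by
    intro p hp
    show algebraMap A (B ⧸ Ideal.map (algebraMap A B) P) p = 0
    rw [IsScalarTower.algebraMap_apply A B (B ⧸ Ideal.map (algebraMap A B) P),
      Ideal.Quotient.algebraMap_eq, Ideal.Quotient.eq_zero_iff_mem]
    exact Ideal.mem_map_of_mem _ hp
  refine LinearEquiv.ofLinear
    (Submodule.liftQ _ (fwd0 A B P) hker)
    (LinearMap.liftBaseChange B (Submodule.liftQ (P : Submodule A A)
      (Algebra.linearMap A (B ⧸ Ideal.map (algebraMap A B) P))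
      (fun p hp => by simpa using hgker p hp)))
    (LinearMap.ext fun z => ?_) (LinearMap.ext fun z => ?_)
  · induction z using TensorProduct.induction_on with
    | zero => simp
    | add u v hu hv => simp only [map_add, hu, hv, LinearMap.id_coe, id_eq]
    | tmul b q =>
      obtain ⟨a, rfl⟩ := Ideal.Quotient.mk_surjective q
      simp only [LinearMap.coe_comp, Function.comp_apply, LinearMap.id_coe, id_eq,
        LinearMap.liftBaseChange_tmul]
      rw [show ((Ideal.Quotient.mk P a : A ⧸ P)) = Submodule.Quotient.mk a from rfl,
        Submodule.liftQ_apply]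
      simp only [Algebra.linearMap_apply]
      rw [IsScalarTower.algebraMap_apply A B (B ⧸ Ideal.map (algebraMap A B) P),
        Ideal.Quotient.algebraMap_eq]
      show b • Submodule.liftQ _ _ hker (Submodule.Quotient.mk (algebraMap A B a)) = _
      rw [Submodule.liftQ_apply]
      show b • (algebraMap A B a ⊗ₜ (1 : A ⧸ P)) = b ⊗ₜ (Ideal.Quotient.mk P a)
      rw [TensorProduct.smul_tmul', smul_eq_mul, mul_comm, ← Algebra.smul_def,
        TensorProduct.smul_tmul]
      congr 1
      rw [← Algebra.algebraMap_eq_smul_one, Ideal.Quotient.algebraMap_eq]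
  · obtain ⟨b, rfl⟩ := Submodule.Quotient.mk_surjective _ z
    simp only [LinearMap.coe_comp, Function.comp_apply, LinearMap.id_coe, id_eq]
    rw [show (Submodule.Quotient.mk b : B ⧸ Ideal.map (algebraMap A B) P)
        = Submodule.Quotient.mk b from rfl, Submodule.liftQ_apply]
    show LinearMap.liftBaseChange B _ (b ⊗ₜ (1 : A ⧸ P)) = _
    rw [LinearMap.liftBaseChange_tmul]
    show b • Submodule.liftQ _ _ _ (Submodule.Quotient.mk 1) = _
    rw [Submodule.liftQ_apply]
    simp only [Algebra.linearMap_apply, map_one]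
    rw [← Algebra.algebraMap_eq_smul_one, Ideal.Quotient.algebraMap_eq]
    rfl

-- lTensor of the scalar action equals the scalar action
lemma lTensor_lsmul (X : Type*) [AddCommGroup X] [Module A X] (s : A) :
    LinearMap.lTensor B (LinearMap.lsmul A X s) = LinearMap.lsmul A (B ⊗[A] X) s := by
  apply TensorProduct.ext'
  intro b x
  simp only [LinearMap.lTensor_tmul, LinearMap.lsmul_apply, TensorProduct.tmul_smul]

lemma comap_eq_of_mem_ass_tensor_quot [IsNoetherianRing B] [Module.Flat A B] {P₁ : Ideal A} (hP₁ : P₁.IsPrime)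
    {Q : Ideal B} (hQ : Q ∈ associatedPrimes B (B ⊗[A] (A ⧸ P₁))) :
    Q.comap (algebraMap A B) = P₁ := by
  obtain ⟨hQp, y, hy⟩ := isAP_iff'.mp hQ
  have key : ∀ c : B, c ∈ Q ↔ c • y = 0 := fun c => by
    rw [hy, Submodule.mem_annihilator_span_singleton]
  have hy0 : y ≠ 0 := by
    rintro rfl
    rw [Submodule.span_zero_singleton, Submodule.annihilator_bot] at hy
    exact hQp.ne_top hy
  haveI := Ideal.Quotient.isDomain P₁  -- A ⧸ P₁ is a domain
  ext s
  simp only [Ideal.mem_comap]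
  constructor
  · intro hs
    by_contra hsP
    -- s acts injectively on A ⧸ P₁
    have hinj : Function.Injective (LinearMap.lsmul A (A ⧸ P₁) s) := by
      intro u v huv
      simp only [LinearMap.lsmul_apply] at huv
      have h1 : (Ideal.Quotient.mk P₁ s) * u = (Ideal.Quotient.mk P₁ s) * v := by
        rw [← Ideal.Quotient.algebraMap_eq, ← Algebra.smul_def, ← Algebra.smul_def]
        exact huv
      have h2 : (Ideal.Quotient.mk P₁ s) ≠ 0 := by
        rw [Ne, Ideal.Quotient.eq_zero_iff_mem]; exact hsP
      exact mul_left_cancel₀ h2 h1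
    have hinj2 : Function.Injective
        (LinearMap.lTensor B (LinearMap.lsmul A (A ⧸ P₁) s)) :=
      Module.Flat.lTensor_preserves_injective_linearMap _ hinj
    rw [lTensor_lsmul] at hinj2
    have : s • y = 0 := by
      rw [← algebraMap_smul B s y]
      exact (key _).mp hs
    have : (LinearMap.lsmul A (B ⊗[A] (A ⧸ P₁)) s) y
        = (LinearMap.lsmul A (B ⊗[A] (A ⧸ P₁)) s) 0 := by
      rw [LinearMap.lsmul_apply, map_zero]; exact this
    exact hy0 (hinj2 this)
  · intro hs
    rw [key, algebraMap_smul B s y]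
    have hz : LinearMap.lsmul A (A ⧸ P₁) s = 0 := by
      apply LinearMap.ext
      intro u
      simp only [LinearMap.lsmul_apply, LinearMap.zero_apply]
      rw [Algebra.smul_def, Ideal.Quotient.algebraMap_eq,
        show Ideal.Quotient.mk P₁ s = 0 from Ideal.Quotient.eq_zero_iff_mem.mpr hs, zero_mul]
    have h2 : LinearMap.lTensor B (LinearMap.lsmul A (A ⧸ P₁) s) = 0 := by
      rw [hz, LinearMap.lTensor_zero]
    rw [lTensor_lsmul] at h2
    rw [show s • y = LinearMap.lsmul A (B ⊗[A] (A ⧸ P₁)) s y from rfl, h2,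
      LinearMap.zero_apply]

lemma tensor_subsingleton (X : Type*) [AddCommGroup X] [Module A X] [Subsingleton X] :
    Subsingleton (B ⊗[A] X) := by
  refine subsingleton_of_forall_eq 0 fun z => ?_
  induction z using TensorProduct.induction_on with
  | zero => rfl
  | add u v hu hv => rw [hu, hv, add_zero]
  | tmul b x => rw [Subsingleton.elim x 0, TensorProduct.tmul_zero]

lemma key_ind [IsNoetherianRing A] [Module.Flat A B]
    (N : Type*) [AddCommGroup N] [Module A N] [Module.Finite A N]
    {Q : Ideal B} (hQ : Q ∈ associatedPrimes B (B ⊗[A] N)) :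
    ∃ P₁ : Ideal A, P₁.IsPrime ∧ Q ∈ associatedPrimes B (B ⊗[A] (A ⧸ P₁)) := by
  have main : ∀ W : Submodule A N,
      Q ∈ associatedPrimes B (B ⊗[A] (N ⧸ W)) →
      ∃ P₁ : Ideal A, P₁.IsPrime ∧ Q ∈ associatedPrimes B (B ⊗[A] (A ⧸ P₁)) := by
    intro W
    induction W using IsNoetherian.induction with
    | _ W ih =>
    intro hW
    have hBnt : Nontrivial (B ⊗[A] (N ⧸ W)) := by
      by_contra hnt
      rw [not_nontrivial_iff_subsingleton] at hnt
      exact not_isAssociatedPrime_of_subsingleton hW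
    have hnt : Nontrivial (N ⧸ W) := by
      by_contra hnt
      rw [not_nontrivial_iff_subsingleton] at hnt
      haveI := tensor_subsingleton (A := A) (B := B) (N ⧸ W)
      exact (not_subsingleton_iff_nontrivial.mpr hBnt) this
    obtain ⟨P₁, hP₁mem⟩ := associatedPrimes.nonempty A (N ⧸ W)
    obtain ⟨hP₁prime, x, hx⟩ := isAP_iff'.mp hP₁mem
    have hx0 : x ≠ 0 := by
      rintro rfl
      rw [Submodule.span_zero_singleton, Submodule.annihilator_bot] at hx
      exact hP₁prime.ne_top hx
    set W' : Submodule A N := (Submodule.span A {x}).comap W.mkQ with hW'def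
    have hle : W ≤ W' := by
      intro w hw
      simp only [hW'def, Submodule.mem_comap]
      rw [show W.mkQ w = 0 from (Submodule.Quotient.mk_eq_zero W).mpr hw]
      exact Submodule.zero_mem _
    have hlt : W < W' := by
      obtain ⟨n, hn⟩ := W.mkQ_surjective x
      refine lt_of_le_of_ne hle fun heq => hx0 ?_
      have hnW' : n ∈ W' := by
        simp only [hW'def, Submodule.mem_comap, hn]
        exact Submodule.mem_span_singleton_self x
      rw [← heq] at hnW'
      rw [← hn, show W.mkQ n = Submodule.Quotient.mk n from rfl,
        Submodule.Quotient.mk_eq_zero]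
      exact hnW'
    have hmap : W'.map W.mkQ = Submodule.span A {x} := by
      rw [hW'def, Submodule.map_comap_eq, Submodule.range_mkQ, top_inf_eq]
    -- the short exact sequence
    set f1 : (Submodule.span A {x}) →ₗ[A] (N ⧸ W) := (Submodule.span A {x}).subtype
    set f2 : (N ⧸ W) →ₗ[A] (N ⧸ W') :=
      (Submodule.quotientQuotientEquivQuotient W W' hle).toLinearMap ∘ₗ
        (W'.map W.mkQ).mkQ
    have hf1inj : Function.Injective f1 := Submodule.injective_subtype _
    have hexact : Function.Exact f1 f2 := by
      rw [LinearMap.exact_iff]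
      rw [show LinearMap.ker f2 =
        Submodule.comap (W'.map W.mkQ).mkQ
          (LinearMap.ker (Submodule.quotientQuotientEquivQuotient W W' hle).toLinearMap)
        from LinearMap.ker_comp _ _]
      rw [LinearEquiv.ker, Submodule.comap_bot, Submodule.ker_mkQ, hmap]
      rw [Submodule.range_subtype]
    have hBexact : Function.Exact (f1.baseChange B) (f2.baseChange B) :=
      Module.Flat.lTensor_exact B hexact
    have hBinj : Function.Injective (f1.baseChange B) :=
      Module.Flat.lTensor_preserves_injective_linearMap f1 hf1inj
    rcases isAssociatedPrime_of_exact (f1.baseChange B) (f2.baseChange B) hBinj hBexact hW with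
      h | h
    · -- Q associated to B ⊗ span x ≃ B ⊗ A ⧸ P₁
      have hker : LinearMap.ker (LinearMap.toSpanSingleton A (N ⧸ W) x)
          = (Submodule.span A {x}).annihilator := by
        ext a
        rw [LinearMap.mem_ker, Submodule.mem_annihilator_span_singleton]
        rfl
      have e : (A ⧸ P₁) ≃ₗ[A] (Submodule.span A {x}) :=
        (Submodule.quotEquivOfEq _ _ (by rw [hx, ← hker])).trans
          ((LinearMap.quotKerEquivRange (LinearMap.toSpanSingleton A (N ⧸ W) x)).trans
            (LinearEquiv.ofEq _ _ (LinearMap.span_singleton_eq_range A (N ⧸ W) x).symm))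
      have eB := LinearEquiv.baseChange A B (A ⧸ P₁) (Submodule.span A {x}) e
      refine ⟨P₁, hP₁prime, ?_⟩
      rw [LinearEquiv.AssociatedPrimes.eq eB]
      exact h
    · exact ih W' hlt h
  have e0 : (N ⧸ (⊥ : Submodule A N)) ≃ₗ[A] N := Submodule.quotEquivOfEqBot ⊥ rfl
  have eB0 := LinearEquiv.baseChange A B _ _ e0
  refine main ⊥ ?_
  rw [LinearEquiv.AssociatedPrimes.eq eB0]
  exact hQ

end AuxiliaryLemmas

/-- For a flat ring map `A → B` of Noetherian commutative rings and an
`A`-module `M`, the associated primes of the base change `B ⊗[A] M` over `B` are exactly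
the union over `P ∈ Ass_A M` of the associated primes of `B ⧸ PB`. -/
theorem stmt0 (A B : Type*) [CommRing A] [CommRing B] [IsNoetherianRing A] [IsNoetherianRing B]
    [Algebra A B] [Module.Flat A B]
    (M : Type*) [AddCommGroup M] [Module A M] :
    associatedPrimes B (B ⊗[A] M) =
      ⋃ P ∈ associatedPrimes A M,
        associatedPrimes B (B ⧸ Ideal.map (algebraMap A B) P) := by
  classical
  ext Q
  simp only [Set.mem_iUnion, exists_prop]
  constructor
  · intro hQass
    obtain ⟨hQp, t, ht⟩ := isAP_iff'.mp hQass
    set P : Ideal A := Q.comap (algebraMap A B) with hPdef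
    haveI hPp : P.IsPrime := Ideal.IsPrime.comap _
    have keyt : ∀ c : B, c ∈ Q ↔ c • t = 0 := fun c => by
      rw [ht, Submodule.mem_annihilator_span_singleton]
    -- Part 1 : `Q ∈ Ass_B (B ⧸ PB)`
    obtain ⟨s, hs⟩ := TensorProduct.exists_finset t
    set N : Submodule A M := Submodule.span A (↑(s.image Prod.snd) : Set M) with hNdef
    haveI : Module.Finite A N := Module.Finite.span_of_finite A (Finset.finite_toSet _)
    have hmem : ∀ i ∈ s, i.2 ∈ N := fun i hi =>
      Submodule.subset_span (Finset.mem_coe.mpr (Finset.mem_image_of_mem Prod.snd hi))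
    set t' : B ⊗[A] N := ∑ i ∈ s.attach, i.1.1 ⊗ₜ (⟨i.1.2, hmem i.1 i.2⟩ : N) with ht'def
    have himg : (N.subtype.baseChange B) t' = t := by
      rw [ht'def, map_sum, hs, ← Finset.sum_attach s (fun i => i.1 ⊗ₜ[A] i.2)]
      apply Finset.sum_congr rfl
      intro i _
      rw [LinearMap.baseChange_tmul]
      rfl
    have hNinj : Function.Injective (N.subtype.baseChange B) :=
      Module.Flat.lTensor_preserves_injective_linearMap _ (Submodule.injective_subtype N)
    have hQN : Q ∈ associatedPrimes B (B ⊗[A] N) := by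
      refine isAP_iff'.mpr ⟨hQp, t', ?_⟩
      ext c
      rw [keyt, Submodule.mem_annihilator_span_singleton]
      constructor
      · intro hc
        apply hNinj
        rw [map_smul, himg, hc, map_zero]
      · intro hc
        rw [← himg, ← map_smul, hc, map_zero]
    obtain ⟨P₁, hP₁p, hQP₁⟩ := key_ind N hQN
    have hP₁eq : P₁ = P := by
      rw [← comap_eq_of_mem_ass_tensor_quot hP₁p hQP₁]
    have hQmem : Q ∈ associatedPrimes B (B ⧸ Ideal.map (algebraMap A B) P) := by
      rw [LinearEquiv.AssociatedPrimes.eq (quotMapEquivTensorQuot A B P)]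
      rw [hP₁eq] at hQP₁
      exact hQP₁
    -- Part 2 : `P ∈ Ass_A M`
    obtain ⟨sP, hsP⟩ := IsNoetherian.noetherian (P : Submodule A A)
    set f : M →ₗ[A] (↥sP → M) := LinearMap.pi (fun i => (i : A) • LinearMap.id) with hfdef
    set K := LinearMap.ker f with hKdef
    have hKexact : Function.Exact K.subtype f := by
      intro m
      constructor
      · intro hm
        exact ⟨⟨m, hm⟩, rfl⟩
      · rintro ⟨⟨m', hm'⟩, rfl⟩
        exact hm'
    have hBexact : Function.Exact (K.subtype.baseChange B) (f.baseChange B) :=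
      Module.Flat.lTensor_exact B hKexact
    have hpi : ∀ (z : B ⊗[A] M),
        TensorProduct.piRight A B B (fun _ : ↥sP => M) (f.baseChange B z)
          = fun (i : ↥sP) => (i : A) • z := by
      intro z
      induction z using TensorProduct.induction_on with
      | zero =>
        funext i
        simp
      | add u v hu hv =>
        funext i
        rw [map_add, map_add, hu, hv]
        simp
      | tmul b m =>
        funext i
        simp only [LinearMap.baseChange_tmul, TensorProduct.piRight_apply,
          TensorProduct.piRightHom_tmul]
        rw [hfdef]
        simp only [LinearMap.pi_apply, LinearMap.smul_apply, LinearMap.id_coe, id_eq]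
        rw [TensorProduct.tmul_smul]
    have h0 : (f.baseChange B) t = 0 := by
      apply (TensorProduct.piRight A B B (fun _ : ↥sP => M)).injective
      rw [hpi t, map_zero]
      funext i
      have hiP : (i : A) ∈ P := by
        rw [← hsP]
        exact Submodule.subset_span i.2
      have : algebraMap A B (i : A) ∈ Q := hiP
      rw [← algebraMap_smul B (i : A) t, (keyt _).mp this]
      rfl
    obtain ⟨t'', ht''⟩ := (hBexact t).mp h0
    obtain ⟨u, hu⟩ := TensorProduct.exists_finset t''
    have hPass : IsAssociatedPrime P M := by
      by_cases hall : ∀ j ∈ u, ∃ a, a ∉ P ∧ a • (j.2 : ↥K) = 0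
      · exfalso
        choose! a ha1 ha2 using hall
        set s₀ := ∏ j ∈ u, a j with hs₀def
        have hs₀P : s₀ ∉ P := by
          intro hmem
          obtain ⟨j, hju, hjP⟩ := (Ideal.IsPrime.prod_mem_iff).mp hmem
          exact ha1 j hju hjP
        have hs₀t'' : s₀ • t'' = 0 := by
          rw [hu, Finset.smul_sum]
          apply Finset.sum_eq_zero
          intro j hj
          rw [← TensorProduct.tmul_smul]
          have : s₀ • j.2 = (0 : ↥K) := by
            rw [hs₀def, ← Finset.mul_prod_erase u a hj, mul_comm, mul_smul, ha2 j hj,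
              smul_zero]
          rw [this, TensorProduct.tmul_zero]
        apply hs₀P
        show algebraMap A B s₀ ∈ Q
        have hsw : (K.subtype.baseChange B) (s₀ • t'')
            = s₀ • ((K.subtype.baseChange B) t'') :=
          (LinearMap.lTensor B K.subtype).map_smul s₀ t''
        rw [keyt, algebraMap_smul, ← ht'', ← hsw, hs₀t'', map_zero]
      · push_neg at hall
        obtain ⟨j, hju, hj⟩ := hall
        refine isAP_iff'.mpr ⟨hPp, (j.2 : M), ?_⟩
        ext a
        rw [Submodule.mem_annihilator_span_singleton]
        constructor
        · intro haP
          have hk : ∀ i : ↥sP, (i : A) • (j.2 : M) = 0 := by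
            intro i
            have h2 : f ((j.2 : M)) = 0 := j.2.2
            have h3 := congrFun h2 i
            rw [hfdef] at h3
            simpa using h3
          rw [← hsP] at haP
          refine Submodule.span_induction ?_ ?_ ?_ ?_ haP
          · intro y hy
            exact hk ⟨y, hy⟩
          · rw [zero_smul]
          · intro y z _ _ hy hz
            rw [add_smul, hy, hz, add_zero]
          · intro c y _ hy
            rw [smul_eq_mul, mul_smul, hy, smul_zero]
        · intro ha0
          by_contra haP
          refine hj a haP ?_
          apply Subtype.ext
          rw [show ((a • j.2 : ↥K) : M) = a • (j.2 : M) from rfl, ha0]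
          rfl
    exact ⟨P, hPass, hQmem⟩
  · rintro ⟨P, hP, hQ⟩
    obtain ⟨hPp, x, hx⟩ := isAP_iff'.mp hP
    have hker : LinearMap.ker (LinearMap.toSpanSingleton A M x)
        = Submodule.annihilator (Submodule.span A {x}) := by
      ext a
      rw [LinearMap.mem_ker, Submodule.mem_annihilator_span_singleton]
      rfl
    have e : (A ⧸ P) ≃ₗ[A] LinearMap.range (LinearMap.toSpanSingleton A M x) :=
      (Submodule.quotEquivOfEq _ _ (by rw [hx, ← hker])).trans
        (LinearMap.quotKerEquivRange _)
    set g : (A ⧸ P) →ₗ[A] M :=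
      (LinearMap.range (LinearMap.toSpanSingleton A M x)).subtype ∘ₗ e.toLinearMap with hgdef
    have hginj : Function.Injective g := by
      rw [hgdef]
      exact (Submodule.injective_subtype _).comp e.injective
    have hGinj : Function.Injective (g.baseChange B) :=
      Module.Flat.lTensor_preserves_injective_linearMap g hginj
    have h1 : Q ∈ associatedPrimes B (B ⊗[A] (A ⧸ P)) := by
      rw [← LinearEquiv.AssociatedPrimes.eq (quotMapEquivTensorQuot A B P)]
      exact hQ
    exact associatedPrimes.subset_of_injective hGinj h1
end

section
/- Let φ : A → B be a ring homomorphism between commutative Noetherian rings with B flat over A. If Q is a prime ideal of B that is an associated prime of B/PB for some prime ideal P of A, then the contraction of Q to A equals P. -/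
open TensorProduct

/-- If `B` is flat over `A`, `P` a prime of `A` and `a ∉ P`, then `algebraMap A B a` is a
nonzerodivisor on `B ⧸ PB`. -/
lemma key_nzd (A B : Type*) [CommRing A] [CommRing B] [Algebra A B] [Module.Flat A B]
    (P : Ideal A) [P.IsPrime] (a : A) (ha : a ∉ P) (b : B)
    (h : algebraMap A B a * b ∈ Ideal.map (algebraMap A B) P) :
    b ∈ Ideal.map (algebraMap A B) P := by
  -- multiplication by `a` is injective on `A ⧸ P`
  have hmk : (Ideal.Quotient.mk P) a ≠ 0 := by
    simpa [Ideal.Quotient.eq_zero_iff_mem] using ha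
  have hinj : Function.Injective (LinearMap.lsmul A (A ⧸ P) a) := by
    intro x y hxy
    simp only [LinearMap.lsmul_apply, Algebra.smul_def, Ideal.Quotient.algebraMap_eq] at hxy
    exact mul_left_cancel₀ hmk hxy
  -- by flatness, multiplication by `a` is injective on `B ⊗[A] (A ⧸ P)`
  have hinj2 : Function.Injective
      (LinearMap.lTensor B (LinearMap.lsmul A (A ⧸ P) a)) :=
    Module.Flat.lTensor_preserves_injective_linearMap _ hinj
  have heq : LinearMap.lTensor B (LinearMap.lsmul A (A ⧸ P) a)
      = LinearMap.lsmul A (B ⊗[A] (A ⧸ P)) a := by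
    apply TensorProduct.ext'
    intro x y
    simp [TensorProduct.tmul_smul, TensorProduct.smul_tmul']
  rw [heq] at hinj2
  -- transfer along the equivalence `B ⊗[A] (A ⧸ P) ≃ B ⧸ P • ⊤`
  let e := TensorProduct.tensorQuotEquivQuotSMul B P
  have hinj3 : Function.Injective
      (LinearMap.lsmul A (B ⧸ (P • ⊤ : Submodule A B)) a) := by
    intro x y hxy
    apply e.symm.injective
    apply hinj2
    simp only [LinearMap.lsmul_apply] at hxy ⊢
    rw [← map_smul e.symm, ← map_smul e.symm, hxy]
  -- now conclude
  have hb : algebraMap A B a * b ∈ (P • ⊤ : Submodule A B) := by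
    rw [Ideal.smul_top_eq_map, Submodule.restrictScalars_mem]
    exact h
  have h0 : a • (Submodule.Quotient.mk b : B ⧸ (P • ⊤ : Submodule A B)) = 0 := by
    rw [← Submodule.Quotient.mk_smul, Submodule.Quotient.mk_eq_zero,
      Algebra.smul_def a b]
    exact hb
  have h2 : (Submodule.Quotient.mk b : B ⧸ (P • ⊤ : Submodule A B)) = 0 :=
    hinj3 (by simpa using h0)
  rw [Submodule.Quotient.mk_eq_zero, Ideal.smul_top_eq_map, Submodule.restrictScalars_mem] at h2
  exact h2

/-- If `A → B` is a flat map of Noetherian commutative rings, `P` is a prime of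
`A` and `Q` is an associated prime of the `B`-module `B ⧸ PB`, then the contraction of `Q`
to `A` is `P`. -/
theorem stmt1 (A B : Type*) [CommRing A] [CommRing B] [IsNoetherianRing A] [IsNoetherianRing B]
    [Algebra A B] [Module.Flat A B]
    (P : Ideal A) [P.IsPrime] (Q : Ideal B) [Q.IsPrime]
    (hQ : Q ∈ associatedPrimes B (B ⧸ Ideal.map (algebraMap A B) P)) :
    Ideal.comap (algebraMap A B) Q = P := by
  obtain ⟨hQp, x, hx⟩ := isAssociatedPrime_iff.mp hQ
  obtain ⟨b, rfl⟩ := Ideal.Quotient.mk_surjective x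
  have hbne : (Ideal.Quotient.mk (Ideal.map (algebraMap A B) P)) b ≠ 0 := by
    intro h0
    apply hQp.ne_top
    rw [hx, h0]
    ext r
    simp [Submodule.mem_colon_singleton]
  apply le_antisymm
  · intro a haQ
    rw [Ideal.mem_comap] at haQ
    by_contra ha
    have h1 : algebraMap A B a • (Ideal.Quotient.mk (Ideal.map (algebraMap A B) P)) b = 0 := by
      rw [hx] at haQ
      rwa [Submodule.mem_colon_singleton, Submodule.mem_bot] at haQ
    rw [Algebra.smul_def, Ideal.Quotient.algebraMap_eq, ← map_mul,
      Ideal.Quotient.eq_zero_iff_mem] at h1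
    have h3 := key_nzd A B P a ha b h1
    rw [← Ideal.Quotient.eq_zero_iff_mem] at h3
    exact hbne h3
  · intro a haP
    rw [Ideal.mem_comap, hx, Submodule.mem_colon_singleton, Submodule.mem_bot]
    rw [Algebra.smul_def, Ideal.Quotient.algebraMap_eq, ← map_mul,
      Ideal.Quotient.eq_zero_iff_mem]
    exact Ideal.mul_mem_right _ _ (Ideal.mem_map_of_mem _ haP)
end

section
/- Let S be a commutative Noetherian ring, M an S-module, and B a flat S-algebra such that for every P ∈ Ass_S(M) the ring B/PB is nonzero. If Ass_B(M ⊗_S B) is finite, then Ass_S(M) is finite. -/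
open TensorProduct

section Aux

variable {S B : Type*} [CommRing S] [CommRing B] [IsNoetherianRing S] [IsNoetherianRing B]
    [Algebra S B] [Module.Flat S B]
    {M : Type*} [AddCommGroup M] [Module S M]

/-- The smul-by-`s` map on `B ⊗[S] (S ⧸ P)` agrees with `lTensor` of smul on `S ⧸ P`. -/
lemma smul_eq_lTensor_lsmul (P : Ideal S) (s : S) (y : B ⊗[S] (S ⧸ P)) :
    s • y = LinearMap.lTensor B (LinearMap.lsmul S (S ⧸ P) s) y := by
  have h : (LinearMap.lsmul S (B ⊗[S] (S ⧸ P)) s) =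
      LinearMap.lTensor B (LinearMap.lsmul S (S ⧸ P) s) :=
    TensorProduct.ext' fun b m => by
      simp [TensorProduct.tmul_smul]
  simpa using LinearMap.congr_fun h y

lemma key_aux (hnz : ∀ P ∈ associatedPrimes S M, Nontrivial (B ⧸ Ideal.map (algebraMap S B) P))
    (P : Ideal S) (hP : P ∈ associatedPrimes S M) :
    ∃ Q ∈ associatedPrimes B (B ⊗[S] M), Q.comap (algebraMap S B) = P := by
  obtain ⟨hPprime, x, hx⟩ := (isAssociatedPrime_iff).mp hP
  haveI := hPprime
  -- the injective map `S ⧸ P →ₗ[S] M`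
  have hker : LinearMap.ker (LinearMap.toSpanSingleton S M x) = P := by
    ext s
    rw [LinearMap.mem_ker, LinearMap.toSpanSingleton_apply, hx,
      Submodule.mem_colon_singleton, Submodule.mem_bot]
  set f : (S ⧸ P) →ₗ[S] M := Submodule.liftQ P (LinearMap.toSpanSingleton S M x) hker.ge
  have hfinj : Function.Injective f := by
    rw [← LinearMap.ker_eq_bot]
    exact Submodule.ker_liftQ_eq_bot _ _ _ hker.le
  -- the base-changed injective map
  have hBinj : Function.Injective (f.baseChange B) := by
    have : ⇑(f.baseChange B) = ⇑(f.lTensor B) := LinearMap.baseChange_eq_ltensor f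
    rw [show (⇑(f.baseChange B) : B ⊗[S] (S ⧸ P) → B ⊗[S] M) = ⇑(f.lTensor B) from this]
    exact Module.Flat.lTensor_preserves_injective_linearMap f hfinj
  -- nontriviality of `B ⊗[S] (S ⧸ P)`
  haveI hnt : Nontrivial (B ⊗[S] (S ⧸ P)) := by
    haveI := hnz P ((isAssociatedPrime_iff).mpr ⟨hPprime, x, hx⟩)
    have htop : Ideal.map (algebraMap S B) P ≠ ⊤ := by
      intro h
      have : Subsingleton (B ⧸ Ideal.map (algebraMap S B) P) := by
        rw [h]; exact Ideal.Quotient.subsingleton_iff.mpr rfl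
      exact not_subsingleton _ this
    refine nontrivial_of_ne ((1 : B) ⊗ₜ (Ideal.Quotient.mk P 1)) 0 fun h => ?_
    have h2 : (Submodule.Quotient.mk (1 : B) : B ⧸ (P • (⊤ : Submodule S B))) = 0 := by
      have he := tensorQuotEquivQuotSMul_tmul_mk (M := B) P (1 : B) (1 : S)
      rw [one_smul] at he
      rw [← he, h, LinearEquiv.map_zero]
    have h3 : (1 : B) ∈ P • (⊤ : Submodule S B) :=
      (Submodule.Quotient.mk_eq_zero _).mp h2
    rw [Ideal.smul_top_eq_map] at h3
    exact htop (Ideal.eq_top_iff_one _ |>.mpr h3)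
  obtain ⟨Q, hQ⟩ := associatedPrimes.nonempty B (B ⊗[S] (S ⧸ P))
  refine ⟨Q, associatedPrimes.subset_of_injective hBinj hQ, ?_⟩
  obtain ⟨hQprime, y, hy⟩ := (isAssociatedPrime_iff).mp hQ
  have hy0 : y ≠ 0 := by
    intro h
    apply hQprime.ne_top
    rw [hy, h, Ideal.eq_top_iff_one, Submodule.mem_colon_singleton, Submodule.mem_bot, smul_zero]
  ext s
  rw [Ideal.mem_comap, hy, Submodule.mem_colon_singleton, Submodule.mem_bot]
  have hsmul : algebraMap S B s • y = s • y := algebraMap_smul B s y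
  constructor
  · intro h
    by_contra hsP
    -- s ∉ P : smul by s is injective on B ⊗ (S ⧸ P)
    have hinj : Function.Injective (LinearMap.lsmul S (S ⧸ P) s) := by
      intro a b hab
      simp only [LinearMap.lsmul_apply] at hab
      have hs0 : Ideal.Quotient.mk P s ≠ 0 := fun h0 =>
        hsP ((Ideal.Quotient.eq_zero_iff_mem).mp h0)
      have ha : (Ideal.Quotient.mk P s) * a = (Ideal.Quotient.mk P s) * b := by
        have e1 : (Ideal.Quotient.mk P s) * a = s • a := by
          rw [← smul_eq_mul, ← Ideal.Quotient.algebraMap_eq]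
          exact algebraMap_smul _ s a
        have e2 : (Ideal.Quotient.mk P s) * b = s • b := by
          rw [← smul_eq_mul, ← Ideal.Quotient.algebraMap_eq]
          exact algebraMap_smul _ s b
        rw [e1, e2, hab]
      exact mul_left_cancel₀ hs0 ha
    have hTinj : Function.Injective (LinearMap.lTensor B (LinearMap.lsmul S (S ⧸ P) s)) :=
      Module.Flat.lTensor_preserves_injective_linearMap _ hinj
    have : s • y = 0 := by rw [← hsmul, h]
    rw [smul_eq_lTensor_lsmul] at this
    exact hy0 (hTinj (by rw [this, map_zero]))
  · intro hsP
    -- s ∈ P : smul by s is zero on S ⧸ P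
    have hz : LinearMap.lsmul S (S ⧸ P) s = 0 := by
      refine LinearMap.ext fun m => ?_
      obtain ⟨t, rfl⟩ := Ideal.Quotient.mk_surjective m
      simp only [LinearMap.lsmul_apply, LinearMap.zero_apply]
      have : s • (Ideal.Quotient.mk P t) = Ideal.Quotient.mk P (s * t) := rfl
      rw [this, Ideal.Quotient.eq_zero_iff_mem]
      exact P.mul_mem_right t hsP
    rw [hsmul, smul_eq_lTensor_lsmul, hz, LinearMap.lTensor_zero, LinearMap.zero_apply]

end Aux

/-- Let `S` be Noetherian, `B` a Noetherian flat `S`-algebra and `M` an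
`S`-module such that `B ⧸ PB ≠ 0` for every associated prime `P` of `M`. If the `B`-module
`M ⊗[S] B` has finitely many associated primes, then so does `M` over `S`. -/
theorem stmt3 (S B : Type*) [CommRing S] [CommRing B] [IsNoetherianRing S] [IsNoetherianRing B]
    [Algebra S B] [Module.Flat S B]
    (M : Type*) [AddCommGroup M] [Module S M]
    (hnz : ∀ P ∈ associatedPrimes S M, Nontrivial (B ⧸ Ideal.map (algebraMap S B) P))
    (hfin : (associatedPrimes B (B ⊗[S] M)).Finite) :
    (associatedPrimes S M).Finite := by
  choose g hg1 hg2 using key_aux (B := B) (M := M) hnz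
  rw [← Set.finite_coe_iff] at hfin ⊢
  refine Finite.of_injective
    (fun P : associatedPrimes S M =>
      (⟨g P.1 P.2, hg1 P.1 P.2⟩ : associatedPrimes B (B ⊗[S] M))) ?_
  rintro ⟨P, hP⟩ ⟨P', hP'⟩ h
  have hgg : g P hP = g P' hP' := congrArg Subtype.val h
  have := hg2 P hP
  rw [hgg, hg2 P' hP'] at this
  exact Subtype.ext this.symm
end

section
/- Let R be a commutative Noetherian ring, P a prime ideal of R, and N an R-module with Ass_R(N) = {P}. Suppose that for every f ∈ R \ P the natural localization map N → N_f is surjective. Then for every f ∈ R \ P the map N → N_f is bijective, and consequently the natural map N → N_P is an isomorphism. -/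
/-!
Since `Ass N = {P}` and `R` is Noetherian, the zero divisors on `N` are exactly the elements
of `P`, so every `s ∉ P` acts injectively on `N`; this makes `N → N_S` injective for every
multiplicative set `S` disjoint from `P`. For surjectivity of `N → N_P`, lift `n / s` to
`m ∈ N` through the surjection `N → N_s`: the relation `s^k • (s • m) = s^k • n` witnessing
this in `N_s` also witnesses `m = n / s` in `N_P`, since `s^k ∉ P`.
-/

open LocalizedModule

theorem isSMulRegular_of_associatedPrimes_eq_singleton {R M : Type*} [CommRing R]
    [IsNoetherianRing R] [AddCommGroup M] [Module R M] {P : Ideal R}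
    (hAss : associatedPrimes R M = {P}) {f : R} (hf : f ∉ P) : IsSMulRegular M f := by
  by_contra hreg
  have hmem : f ∈ ⋃ p ∈ associatedPrimes R M, (p : Set R) := by
    rw [biUnion_associatedPrimes_eq_compl_regular]
    exact hreg
  simp only [hAss, Set.mem_singleton_iff, Set.iUnion_iUnion_eq_left, SetLike.mem_coe] at hmem
  exact hf hmem

theorem LocalizedModule.mkLinearMap_injective_of_associatedPrimes_eq_singleton {R M : Type*}
    [CommRing R] [IsNoetherianRing R] [AddCommGroup M] [Module R M] {P : Ideal R} [P.IsPrime]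
    (hAss : associatedPrimes R M = {P}) {S : Submonoid R} (hS : S ≤ P.primeCompl) :
    Function.Injective (mkLinearMap S M) :=
  (IsLocalizedModule.injective_iff_isRegular S _).2 fun s ↦
    isSMulRegular_of_associatedPrimes_eq_singleton hAss (hS s.2)

theorem LocalizedModule.mkLinearMap_surjective_of_forall_powers {R M : Type*} [CommSemiring R]
    [AddCommMonoid M] [Module R M] {S : Submonoid R}
    (h : ∀ s ∈ S, Function.Surjective (mkLinearMap (Submonoid.powers s) M)) :
    Function.Surjective (mkLinearMap S M) := by
  intro x
  induction x using LocalizedModule.induction_on with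
  | h n s =>
    obtain ⟨m, hm⟩ := h s s.2 (mk n ⟨s, Submonoid.mem_powers _⟩)
    obtain ⟨⟨_, k, rfl⟩, hk⟩ := mk_eq.1 hm
    exact ⟨m, mk_eq.2 ⟨⟨s ^ k, pow_mem s.2 k⟩, hk⟩⟩

/-- Let `R` be Noetherian, `P` prime, and `N` an `R`-module with
`Ass_R N = {P}`.  If for every `f ∉ P` the localization map `N → N_f` is surjective, then
for every `f ∉ P` it is bijective, and the natural map `N → N_P` is an isomorphism. -/
theorem stmt9 (R : Type*) [CommRing R] [IsNoetherianRing R] (P : Ideal R) [P.IsPrime]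
    (N : Type*) [AddCommGroup N] [Module R N]
    (hAss : associatedPrimes R N = {P})
    (hsurj : ∀ f : R, f ∉ P →
      Function.Surjective (LocalizedModule.mkLinearMap (Submonoid.powers f) N)) :
    (∀ f : R, f ∉ P →
      Function.Bijective (LocalizedModule.mkLinearMap (Submonoid.powers f) N)) ∧
    Function.Bijective (LocalizedModule.mkLinearMap P.primeCompl N) :=
  ⟨fun f hf ↦ ⟨mkLinearMap_injective_of_associatedPrimes_eq_singleton hAss
      (Submonoid.powers_le.2 hf), hsurj f hf⟩,
    mkLinearMap_injective_of_associatedPrimes_eq_singleton hAss le_rfl,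
    mkLinearMap_surjective_of_forall_powers hsurj⟩
end
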